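/- arXiv:2211.10386 — 3 statements merged into one kernel-verified Lean document; each statement's English description precedes it below -/
import Mathlib

section
/- Let G be a group, φ an automorphism of G, Γ = G ⋊_φ ℤ, K ⊆ Γ a subset, g ∈ G and r ∈ ℤ with r ≠ 0. Then t^r g has a conjugate in K (i.e., there exists γ ∈ Γ with γ⁻¹ (t^r g) γ ∈ K) if and only if there exist a natural number j with j < |r| and an element v ∈ G such that φ^r(v)⁻¹ · φ^j(g) · v ∈ K_r, where K_r = { x ∈ G : t^r x ∈ K }. -/
/-- The semidirect product `Γ = G ⋊_φ ℤ`, built so that `t⁻¹ g t = φ g`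
for the generator `t` of the `ℤ`-factor. -/
abbrev SDP (G : Type*) [Group G] (φ : MulAut G) :=
  SemidirectProduct G (Multiplicative ℤ) (zpowersHom (MulAut G) φ⁻¹)

/-- The generator `t` of the `ℤ`-factor of `G ⋊_φ ℤ`. -/
def tgen {G : Type*} [Group G] (φ : MulAut G) : SDP G φ :=
  SemidirectProduct.inr (Multiplicative.ofAdd 1)

/-- `K_r = { x ∈ G : t^r x ∈ K }` for a subset `K ⊆ G ⋊_φ ℤ`. -/
def Kset {G : Type*} [Group G] (φ : MulAut G) (K : Set (SDP G φ)) (r : ℤ) : Set G :=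
  {x : G | tgen φ ^ r * SemidirectProduct.inl x ∈ K}

/-!
Writing `γ = t^a v`, one computes `γ⁻¹ (t^r g) γ = t^r (φ^r(v)⁻¹ φ^a(g) v)`, so `t^r g` has a
conjugate in `K` iff `φ^a(g)` is `φ^r`-twisted conjugate into `K_r` for some `a ∈ ℤ`. Since
`x` and `φ^r(x)` are always `φ^r`-twisted conjugate (by `x⁻¹`), this condition on `a` has
period `r`, and so it suffices to let `a` run over the residues `0 ≤ j < |r|`.
-/

theorem Function.Periodic.apply_emod {α : Type*} {f : ℤ → α} {c : ℤ}
    (h : Function.Periodic f c) (a : ℤ) : f (a % c) = f a := by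
  rw [Int.emod_def, mul_comm]
  exact h.sub_int_mul_eq (a / c)

theorem MulAut.exists_twisted_conj_apply_mem_iff {G : Type*} [Group G] (ψ : MulAut G)
    (x : G) (S : Set G) :
    (∃ v, (ψ v)⁻¹ * ψ x * v ∈ S) ↔ ∃ v, (ψ v)⁻¹ * x * v ∈ S := by
  have twist (v : G) : (ψ (x⁻¹ * v))⁻¹ * x * (x⁻¹ * v) = (ψ v)⁻¹ * ψ x * v := by
    simp only [map_mul, map_inv, mul_inv_rev, inv_inv]
    group
  constructor
  · rintro ⟨v, hv⟩
    exact ⟨x⁻¹ * v, by rwa [twist]⟩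
  · rintro ⟨w, hw⟩
    exact ⟨x * w, by rwa [← twist, inv_mul_cancel_left]⟩

theorem periodic_exists_twisted_conj_zpow_apply_mem {G : Type*} [Group G] (φ : MulAut G)
    (g : G) (S : Set G) (r : ℤ) :
    Function.Periodic (fun a : ℤ => ∃ v, ((φ ^ r) v)⁻¹ * (φ ^ a) g * v ∈ S) r := by
  intro a
  simp only [add_comm a r, zpow_add, MulAut.mul_apply]
  exact propext (MulAut.exists_twisted_conj_apply_mem_iff _ _ _)

section SemidirectProduct

variable {G : Type*} [Group G] (φ : MulAut G)

theorem tgen_zpow (a : ℤ) : tgen φ ^ a = SemidirectProduct.inr (Multiplicative.ofAdd a) := by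
  rw [tgen, ← map_zpow, ← ofAdd_zsmul, smul_eq_mul, mul_one]

theorem tgen_zpow_mul_inl (a : ℤ) (v : G) :
    tgen φ ^ a * SemidirectProduct.inl v = ⟨(φ ^ (-a)) v, Multiplicative.ofAdd a⟩ := by
  rw [tgen_zpow]
  ext <;> simp [zpow_neg]

theorem exists_eq_tgen_zpow_mul_inl (γ : SDP G φ) :
    ∃ (a : ℤ) (v : G), γ = tgen φ ^ a * SemidirectProduct.inl v := by
  refine ⟨γ.right.toAdd, (φ ^ γ.right.toAdd) γ.left, ?_⟩
  rw [tgen_zpow_mul_inl]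
  ext <;> simp [← MulAut.mul_apply]

theorem conj_tgen_zpow_mul_inl (g v : G) (r a : ℤ) :
    (tgen φ ^ a * SemidirectProduct.inl v)⁻¹ * (tgen φ ^ r * SemidirectProduct.inl g) *
        (tgen φ ^ a * SemidirectProduct.inl v) =
      tgen φ ^ r * SemidirectProduct.inl (((φ ^ r) v)⁻¹ * (φ ^ a) g * v) := by
  rw [tgen_zpow_mul_inl, tgen_zpow_mul_inl, tgen_zpow_mul_inl]
  ext
  · simp [SemidirectProduct.mul_left, ← MulAut.mul_apply, ← zpow_add, -zpow_neg]
    rw [add_comm]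
  · simp

end SemidirectProduct

/-- For `r ≠ 0`, `t^r g` has a conjugate in `K` iff there are `j < |r|` and `v ∈ G`
with `φ^r(v)⁻¹ φ^j(g) v ∈ K_r`. -/
theorem conj_in_K_iff_twisted_bounded {G : Type*} [Group G] (φ : MulAut G)
    (K : Set (SDP G φ)) (g : G) (r : ℤ) (hr : r ≠ 0) :
    (∃ γ : SDP G φ, γ⁻¹ * (tgen φ ^ r * SemidirectProduct.inl g) * γ ∈ K) ↔
      ∃ j : ℕ, j < r.natAbs ∧ ∃ v : G, ((φ ^ r) v)⁻¹ * (φ ^ j) g * v ∈ Kset φ K r := by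
  have periodic := periodic_exists_twisted_conj_zpow_apply_mem φ g (Kset φ K r) r
  constructor
  · rintro ⟨γ, hγ⟩
    obtain ⟨a, v, rfl⟩ := exists_eq_tgen_zpow_mul_inl φ γ
    rw [conj_tgen_zpow_mul_inl] at hγ
    have hmod : ((a % r).toNat : ℤ) = a % r := Int.toNat_of_nonneg (Int.emod_nonneg a hr)
    refine ⟨(a % r).toNat, by have := Int.emod_lt a hr; omega, ?_⟩
    rw [← zpow_natCast, hmod]
    exact (periodic.apply_emod a).symm ▸ ⟨v, hγ⟩
  · rintro ⟨j, -, v, hv⟩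
    refine ⟨tgen φ ^ (j : ℤ) * SemidirectProduct.inl v, ?_⟩
    rwa [conj_tgen_zpow_mul_inl, zpow_natCast]
end

section
/- Let G be a group, φ : G → G a group endomorphism, and u, v ∈ G. Let Γ = G ∗ F be the free product of G with a free group F of rank 2 with basis {x, y}, let ι : G → Γ denote the canonical inclusion, and let ψ : Γ → Γ be the unique group homomorphism satisfying ψ(ι(g)) = ι(φ(g)) for all g ∈ G, ψ(x) = x · ι(v), and ψ(y) = ι(u)⁻¹ · y. Then there exists w ∈ G with v = w⁻¹ · u · φ(w) (i.e., u and v are φ-twisted conjugate) if and only if there exists z ∈ G such that x · ι(z) · y is a fixed point of ψ, i.e., ψ(x · ι(z) · y) = x · ι(z) · y. -/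
/-- Twisted-conjugacy as a fixed-point problem: if `Γ = G ∗ F(x, y)` and
`ψ : Γ →* Γ` restricts to `φ` on `G` and sends `x ↦ x v`, `y ↦ u⁻¹ y`, then `u` and
`v` are `φ`-twisted conjugate iff `ψ` fixes some element of the form `x z y`, `z ∈ G`. -/
theorem twisted_conj_iff_fixed_point {G : Type*} [Group G] (φ : G →* G) (u v : G)
    (ψ : Monoid.Coprod G (FreeGroup (Fin 2)) →* Monoid.Coprod G (FreeGroup (Fin 2)))
    (hψG : ∀ g : G, ψ (Monoid.Coprod.inl g) = Monoid.Coprod.inl (φ g))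
    (hψx : ψ (Monoid.Coprod.inr (FreeGroup.of 0)) =
      Monoid.Coprod.inr (FreeGroup.of 0) * Monoid.Coprod.inl v)
    (hψy : ψ (Monoid.Coprod.inr (FreeGroup.of 1)) =
      (Monoid.Coprod.inl u)⁻¹ * Monoid.Coprod.inr (FreeGroup.of 1)) :
    (∃ w : G, v = w⁻¹ * u * φ w) ↔
      ∃ z : G,
        ψ (Monoid.Coprod.inr (FreeGroup.of 0) * Monoid.Coprod.inl z *
            Monoid.Coprod.inr (FreeGroup.of 1)) =
          Monoid.Coprod.inr (FreeGroup.of 0) * Monoid.Coprod.inl z *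
            Monoid.Coprod.inr (FreeGroup.of 1) := by
  have key : ∀ z : G,
      ψ (Monoid.Coprod.inr (FreeGroup.of 0) * Monoid.Coprod.inl z *
          Monoid.Coprod.inr (FreeGroup.of 1)) =
        Monoid.Coprod.inr (FreeGroup.of 0) * Monoid.Coprod.inl (v * φ z * u⁻¹) *
          Monoid.Coprod.inr (FreeGroup.of 1) := by
    intro z
    simp only [map_mul, hψG, hψx, hψy, map_mul, map_inv]
    group
  constructor
  · rintro ⟨w, hw⟩
    refine ⟨w⁻¹, ?_⟩
    rw [key]
    have : v * φ w⁻¹ * u⁻¹ = w⁻¹ := by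
      rw [hw]; simp [mul_assoc]
    rw [this]
  · rintro ⟨z, hz⟩
    rw [key] at hz
    have h1 : Monoid.Coprod.inl (v * φ z * u⁻¹) = (Monoid.Coprod.inl z : Monoid.Coprod G (FreeGroup (Fin 2))) := by
      have := mul_right_cancel hz
      exact mul_left_cancel this
    have h2 : v * φ z * u⁻¹ = z := Monoid.Coprod.inl_injective h1
    refine ⟨z⁻¹, ?_⟩
    rw [mul_inv_eq_iff_eq_mul] at h2
    simp only [inv_inv, map_inv]
    exact eq_mul_inv_iff_mul_eq.mpr h2
end

section
/- Let F be a group, σ : F → F a group endomorphism, and z, y, v ∈ F. Let Γ = F ∗ C be the free product of F with an infinite cyclic group C generated by c, let ι : F → Γ be the canonical inclusion, and let ψ : Γ → Γ be the unique group homomorphism with ψ(ι(g)) = ι(σ(g)) for all g ∈ F and ψ(c) = ι(z) · c. Then there exists d ∈ ℕ with ψ^d(ι(y) · c) = ι(v) · c if and only if there exists d ∈ ℕ with v = σ^d(y) · σ^{d-1}(z) · σ^{d-2}(z) ⋯ σ(z) · z (i.e., v = σ^d(y) · ∏_{i=0}^{d-1} σ^{d-1-i}(z), the product taken with decreasing exponents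 from left to right). -/
/-- In `Γ = F ∗ ⟨c⟩` with `ψ` restricting to `σ` on `F` and sending `c ↦ z c`, one has
`ψ^d(y c) = v c` for some `d ∈ ℕ` iff `v = σ^d(y) · σ^{d-1}(z) ⋯ σ(z) · z` for some
`d ∈ ℕ` (product with decreasing exponents, left to right). -/
theorem orbit_in_coprod_iff {F : Type*} [Group F] (σ : Monoid.End F) (z y v : F)
    (ψ : Monoid.End (Monoid.Coprod F (Multiplicative ℤ)))
    (hψF : ∀ g : F, ψ (Monoid.Coprod.inl g) = Monoid.Coprod.inl (σ g))
    (hψc : ψ (Monoid.Coprod.inr (Multiplicative.ofAdd (1 : ℤ))) =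
      Monoid.Coprod.inl z * Monoid.Coprod.inr (Multiplicative.ofAdd (1 : ℤ))) :
    (∃ d : ℕ,
        (ψ ^ d) (Monoid.Coprod.inl y * Monoid.Coprod.inr (Multiplicative.ofAdd (1 : ℤ))) =
          Monoid.Coprod.inl v * Monoid.Coprod.inr (Multiplicative.ofAdd (1 : ℤ))) ↔
      ∃ d : ℕ, v = (σ ^ d) y * (((List.range d).map fun i => (σ ^ (d - 1 - i)) z).prod) := by
  set c : Monoid.Coprod F (Multiplicative ℤ) :=
    Monoid.Coprod.inr (Multiplicative.ofAdd (1 : ℤ)) with hc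
  have key : ∀ d : ℕ, (ψ ^ d) (Monoid.Coprod.inl y * c) =
      Monoid.Coprod.inl
        ((σ ^ d) y * (((List.range d).map fun i => (σ ^ (d - 1 - i)) z).prod)) * c := by
    intro d
    induction d with
    | zero => simp
    | succ n ih =>
      have hstep : (ψ ^ (n + 1)) (Monoid.Coprod.inl y * c)
          = ψ ((ψ ^ n) (Monoid.Coprod.inl y * c)) := by
        rw [pow_succ']; rfl
      rw [hstep, ih, map_mul, hψF, hψc, ← mul_assoc, ← map_mul]
      congr 2
      rw [map_mul, show σ ((σ ^ n) y) = (σ ^ (n + 1)) y from by rw [pow_succ']; rfl]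
      rw [List.range_succ, List.map_append, List.prod_append]
      simp only [List.map_map, List.prod_cons, List.prod_nil, List.map_cons, List.map_nil]
      have hmap : ((List.range n).map fun i => (σ ^ (n + 1 - 1 - i)) z)
          = (List.range n).map (σ ∘ fun i => (σ ^ (n - 1 - i)) z) := by
        apply List.map_congr_left
        intro i hi
        have hi' : i < n := List.mem_range.mp hi
        have : n + 1 - 1 - i = (n - 1 - i) + 1 := by omega
        simp only [Function.comp]
        rw [this, pow_succ']
        rfl
      rw [hmap, ← List.map_map, ← map_list_prod (σ : F →* F)]
      simp [mul_assoc]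
  have inj : ∀ a b : F, Monoid.Coprod.inl a * c = Monoid.Coprod.inl b * c → a = b := by
    intro a b h
    have := mul_right_cancel h
    exact Monoid.Coprod.inl_injective this
  constructor
  · rintro ⟨d, hd⟩
    refine ⟨d, ?_⟩
    exact (inj _ _ ((key d).symm.trans hd)).symm
  · rintro ⟨d, hd⟩
    exact ⟨d, by rw [key d, hd]⟩
end
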